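/- arXiv:1204.3203 — 5 statements merged into one kernel-verified Lean document; each statement's English description precedes it below -/
import Mathlib

section
/- Let P be a plane poset, i.e., a finite set with two partial orders ≤_h and ≤_r such that any two distinct elements are comparable for ≤_h if and only if they are not comparable for ≤_r. Define x ≤ y iff (x ≤_h y or x ≤_r y). Then ≤ is a total order on P. -/
/-- A plane poset: a finite set with two partial orders `leh` and `ler` such that
two distinct elements are comparable for `leh` iff they are not comparable for `ler`. -/
structure PlanePoset (α : Type) where
  leh : α → α → Prop
  ler : α → α → Prop
  leh_refl : ∀ x, leh x x
  leh_antisymm : ∀ ⦃x y⦄, leh x y → leh y x → x = y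
  leh_trans : ∀ ⦃x y z⦄, leh x y → leh y z → leh x z
  ler_refl : ∀ x, ler x x
  ler_antisymm : ∀ ⦃x y⦄, ler x y → ler y x → x = y
  ler_trans : ∀ ⦃x y z⦄, ler x y → ler y z → ler x z
  compat : ∀ x y, x ≠ y → ((leh x y ∨ leh y x) ↔ ¬(ler x y ∨ ler y x))

/-
Two distinct elements are comparable for exactly one of the two orders, which gives totality and
antisymmetry of `≤ = ≤_h ∪ ≤_r` at once. For transitivity only the mixed chains `x ≤_h y ≤_r z`
need thought: `x` and `z` are comparable for one of the orders, and the "wrong" direction in either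
order would make `y` comparable with `x` or `z` for both orders. Exchanging the roles of `≤_h` and
`≤_r` (again a plane poset) reduces `x ≤_r y ≤_h z` to the same case.
-/

namespace PlanePoset

variable {α : Type} (P : PlanePoset α)

def swap : PlanePoset α where
  leh := P.ler
  ler := P.leh
  leh_refl := P.ler_refl
  leh_antisymm := P.ler_antisymm
  leh_trans := P.ler_trans
  ler_refl := P.leh_refl
  ler_antisymm := P.leh_antisymm
  ler_trans := P.leh_trans
  compat x y hxy := by rw [P.compat x y hxy, not_not]

def le (x y : α) : Prop := P.leh x y ∨ P.ler x y

variable {P} {x y z : α}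

theorem comparable_of_ne (hxy : x ≠ y) :
    (P.leh x y ∨ P.leh y x) ∨ (P.ler x y ∨ P.ler y x) := by
  by_cases h : P.leh x y ∨ P.leh y x
  · exact Or.inl h
  · exact Or.inr (not_not.mp (mt (P.compat x y hxy).mpr h))

theorem not_leh_of_ler (hxy : x ≠ y) (h : P.ler x y) : ¬P.leh y x := fun h' =>
  (P.compat x y hxy).mp (Or.inr h') (Or.inl h)

theorem eq_of_leh_of_ler (h₁ : P.leh x y) (h₂ : P.ler y x) : x = y := by
  by_contra hxy
  exact not_leh_of_ler (Ne.symm hxy) h₂ h₁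

theorem le_of_leh_of_ler (h₁ : P.leh x y) (h₂ : P.ler y z) : P.le x z := by
  rcases eq_or_ne x y with rfl | hxy
  · exact Or.inr h₂
  rcases eq_or_ne y z with rfl | hyz
  · exact Or.inl h₁
  rcases eq_or_ne x z with rfl | hxz
  · exact Or.inl (P.leh_refl x)
  rcases comparable_of_ne hxz with (hxz | hzx) | (hxz | hzx)
  · exact Or.inl hxz
  · exact absurd (P.leh_trans hzx h₁) (not_leh_of_ler hyz h₂)
  · exact Or.inr hxz
  · exact absurd h₁ (not_leh_of_ler (Ne.symm hxy) (P.ler_trans h₂ hzx))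

theorem le_of_ler_of_leh (h₁ : P.ler x y) (h₂ : P.leh y z) : P.le x z :=
  (le_of_leh_of_ler (P := P.swap) h₁ h₂).symm

theorem le_antisymm (h₁ : P.le x y) (h₂ : P.le y x) : x = y := by
  rcases h₁ with h₁ | h₁ <;> rcases h₂ with h₂ | h₂
  · exact P.leh_antisymm h₁ h₂
  · exact eq_of_leh_of_ler h₁ h₂
  · exact (eq_of_leh_of_ler h₂ h₁).symm
  · exact P.ler_antisymm h₁ h₂

theorem le_trans (h₁ : P.le x y) (h₂ : P.le y z) : P.le x z := by
  rcases h₁ with h₁ | h₁ <;> rcases h₂ with h₂ | h₂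
  · exact Or.inl (P.leh_trans h₁ h₂)
  · exact le_of_leh_of_ler h₁ h₂
  · exact le_of_ler_of_leh h₁ h₂
  · exact Or.inr (P.ler_trans h₁ h₂)

theorem le_total (x y : α) : P.le x y ∨ P.le y x := by
  rcases eq_or_ne x y with rfl | hxy
  · exact Or.inl (Or.inl (P.leh_refl x))
  rcases comparable_of_ne hxy with (h | h) | (h | h)
  · exact Or.inl (Or.inl h)
  · exact Or.inr (Or.inl h)
  · exact Or.inl (Or.inr h)
  · exact Or.inr (Or.inr h)

end PlanePoset

theorem stmt0_general {α : Type} (P : PlanePoset α) :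
    (∀ x, P.leh x x ∨ P.ler x x) ∧
    (∀ x y, (P.leh x y ∨ P.ler x y) → (P.leh y x ∨ P.ler y x) → x = y) ∧
    (∀ x y z, (P.leh x y ∨ P.ler x y) → (P.leh y z ∨ P.ler y z) →
      (P.leh x z ∨ P.ler x z)) ∧
    (∀ x y, (P.leh x y ∨ P.ler x y) ∨ (P.leh y x ∨ P.ler y x)) :=
  ⟨fun x => Or.inl (P.leh_refl x), fun _ _ => PlanePoset.le_antisymm,
    fun _ _ _ => PlanePoset.le_trans, PlanePoset.le_total⟩

theorem stmt0 {α : Type} [Fintype α] (P : PlanePoset α) :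
    (∀ x, P.leh x x ∨ P.ler x x) ∧
    (∀ x y, (P.leh x y ∨ P.ler x y) → (P.leh y x ∨ P.ler y x) → x = y) ∧
    (∀ x y z, (P.leh x y ∨ P.ler x y) → (P.leh y z ∨ P.ler y z) →
      (P.leh x z ∨ P.ler x z)) ∧
    (∀ x y, (P.leh x y ∨ P.ler x y) ∨ (P.leh y x ∨ P.ler y x)) :=
  stmt0_general P
end

section
/- For each permutation σ ∈ S_n, define a structure on {1,…,n} by: i ≤_h j iff (i ≤ j and σ(i) ≤ σ(j)), and i ≤_r j iff (i ≤ j and σ(i) ≥ σ(j)). Then ({1,…,n}, ≤_h, ≤_r) is a plane poset, and the resulting map Ψ_n from S_n to the set of plane poset structures on {1,…,n} (whose induced total order x ≤ y iff x ≤_h y or x ≤_r y is the usual order) is a bijection. -/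
/-! In a plane poset the relation `x ≤' y :↔ x ≤ₕ y ∨ y ≤ᵣ x` (`PlaneData.leTwist`) is a second
total order: the two comparabilities are complementary, so a chain mixing `≤ₕ` and `≤ᵣ` the wrong
way collapses to an equality. For `psi σ` it is `σ i ≤ σ j`, and since an order automorphism of
`Fin n` is trivial, `σ` is recovered from it. Conversely a normalized plane poset is determined by
its two total orders (`x ≤ₕ y ↔ x ≤ y ∧ x ≤' y` and `x ≤ᵣ y ↔ x ≤ y ∧ y ≤' x`), and `≤'` is
realized by the increasing bijection onto `Fin n`. -/

/-- Raw data of two relations on `{1,…,n}` (modeled as `Fin n`). -/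
structure PlaneData (n : ℕ) where
  leh : Fin n → Fin n → Prop
  ler : Fin n → Fin n → Prop

/-- The data is a plane poset: both relations are partial orders, and two
distinct elements are comparable for `leh` iff not comparable for `ler`. -/
def IsPlanePoset {n : ℕ} (D : PlaneData n) : Prop :=
  (∀ x, D.leh x x) ∧ (∀ x y, D.leh x y → D.leh y x → x = y) ∧
  (∀ x y z, D.leh x y → D.leh y z → D.leh x z) ∧
  (∀ x, D.ler x x) ∧ (∀ x y, D.ler x y → D.ler y x → x = y) ∧
  (∀ x y z, D.ler x y → D.ler y z → D.ler x z) ∧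
  (∀ x y, x ≠ y → ((D.leh x y ∨ D.leh y x) ↔ ¬(D.ler x y ∨ D.ler y x)))

/-- The induced total order `x ≤ y ↔ (x ≤ₕ y ∨ x ≤ᵣ y)` is the usual order on `Fin n`. -/
def Normalized {n : ℕ} (D : PlaneData n) : Prop :=
  ∀ i j : Fin n, (D.leh i j ∨ D.ler i j) ↔ i ≤ j

/-- The map `Ψₙ` from permutations to plane poset data. -/
def psi {n : ℕ} (σ : Equiv.Perm (Fin n)) : PlaneData n where
  leh i j := i ≤ j ∧ σ i ≤ σ j
  ler i j := i ≤ j ∧ σ j ≤ σ i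

theorem Equiv.eq_of_forall_le_iff_le {α β : Type*} [LinearOrder β] [WellFoundedLT β]
    {f g : α ≃ β} (h : ∀ a b, f a ≤ f b ↔ g a ≤ g b) : f = g := by
  let e : β ≃o β := ⟨f.symm.trans g, fun {x y} => by simpa using (h (f.symm x) (f.symm y)).symm⟩
  have he : e = OrderIso.refl β := Subsingleton.elim _ _
  ext a
  simpa [e] using (DFunLike.congr_fun he (f a)).symm

theorem exists_equiv_fin_le_iff_of_isLinearOrder {α : Type*} [Fintype α] {k : ℕ}
    (hk : Fintype.card α = k) (r : α → α → Prop) [IsLinearOrder α r] :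
    ∃ e : α ≃ Fin k, ∀ a b, r a b ↔ e a ≤ e b := by
  let : LinearOrder α :=
    { le := r
      le_refl := refl_of r
      le_trans := fun _ _ _ => trans_of r
      le_antisymm := fun _ _ => antisymm_of r
      le_total := total_of r
      toDecidableLE := Classical.decRel r }
  let e := (Fintype.orderIsoFinOfCardEq α hk).symm
  exact ⟨e.toEquiv, fun a b => e.le_iff_le.symm⟩

attribute [ext] PlaneData

namespace PlaneData

variable {n : ℕ}

def leTwist (D : PlaneData n) (x y : Fin n) : Prop :=
  D.leh x y ∨ D.ler y x

theorem leTwist_psi (σ : Equiv.Perm (Fin n)) (i j : Fin n) :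
    (psi σ).leTwist i j ↔ σ i ≤ σ j := by
  constructor
  · rintro (⟨-, h⟩ | ⟨-, h⟩) <;> exact h
  · intro h
    rcases le_total i j with hij | hji
    · exact Or.inl ⟨hij, h⟩
    · exact Or.inr ⟨hji, h⟩

end PlaneData

namespace IsPlanePoset

variable {n : ℕ} {D : PlaneData n}

theorem isPartialOrder_leh (hD : IsPlanePoset D) : IsPartialOrder (Fin n) D.leh where
  refl := hD.1
  antisymm := hD.2.1
  trans := hD.2.2.1

theorem isPartialOrder_ler (hD : IsPlanePoset D) : IsPartialOrder (Fin n) D.ler where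
  refl := hD.2.2.2.1
  antisymm := hD.2.2.2.2.1
  trans := hD.2.2.2.2.2.1

theorem eq_of_leh_of_ler (hD : IsPlanePoset D) {x y : Fin n} (hh : D.leh x y)
    (hr : D.ler x y) : x = y := by
  by_contra hxy
  exact (hD.2.2.2.2.2.2 x y hxy).mp (Or.inl hh) (Or.inl hr)

theorem leh_or_ler (hD : IsPlanePoset D) (x y : Fin n) :
    D.leh x y ∨ D.leh y x ∨ D.ler x y ∨ D.ler y x := by
  by_cases hxy : x = y
  · exact Or.inl (hxy ▸ hD.1 x)
  · have := mt (hD.2.2.2.2.2.2 x y hxy).mpr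
    tauto

theorem isLinearOrder_leTwist (hD : IsPlanePoset D) : IsLinearOrder (Fin n) D.leTwist := by
  have := hD.isPartialOrder_leh
  have := hD.isPartialOrder_ler
  refine
    { refl := fun x => Or.inl (refl x), antisymm := ?antisymm, trans := ?trans, total := ?total }
  case antisymm =>
    rintro x y (hh | hr) (hh' | hr')
    · exact antisymm hh hh'
    · exact hD.eq_of_leh_of_ler hh hr'
    · exact (hD.eq_of_leh_of_ler hh' hr).symm
    · exact antisymm hr' hr
  case trans =>
    rintro x y z (hxy | hyx) (hyz | hzy)
    · exact Or.inl (_root_.trans hxy hyz)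
    · rcases hD.leh_or_ler x z with h | h | h | h
      · exact Or.inl h
      · obtain rfl := hD.eq_of_leh_of_ler (_root_.trans h hxy) hzy
        exact Or.inl hxy
      · obtain rfl := hD.eq_of_leh_of_ler hxy (_root_.trans h hzy)
        exact Or.inr hzy
      · exact Or.inr h
    · rcases hD.leh_or_ler x z with h | h | h | h
      · exact Or.inl h
      · obtain rfl := hD.eq_of_leh_of_ler (_root_.trans hyz h) hyx
        exact Or.inl hyz
      · obtain rfl := hD.eq_of_leh_of_ler hyz (_root_.trans hyx h)
        exact Or.inr hyx
      · exact Or.inr h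
    · exact Or.inr (_root_.trans hzy hyx)
  case total =>
    intro x y
    rcases hD.leh_or_ler x y with h | h | h | h
    · exact Or.inl (Or.inl h)
    · exact Or.inr (Or.inl h)
    · exact Or.inr (Or.inr h)
    · exact Or.inl (Or.inr h)

end IsPlanePoset

section Psi

variable {n : ℕ}

theorem isPlanePoset_psi (σ : Equiv.Perm (Fin n)) : IsPlanePoset (psi σ) := by
  refine ⟨fun x => ⟨le_rfl, le_rfl⟩, fun x y h₁ h₂ => le_antisymm h₁.1 h₂.1,
    fun x y z h₁ h₂ => ⟨h₁.1.trans h₂.1, h₁.2.trans h₂.2⟩, fun x => ⟨le_rfl, le_rfl⟩,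
    fun x y h₁ h₂ => le_antisymm h₁.1 h₂.1, fun x y z h₁ h₂ => ⟨h₁.1.trans h₂.1, h₂.2.trans h₁.2⟩,
    fun x y hxy => ?_⟩
  have hσ : σ x ≠ σ y := σ.injective.ne hxy
  simp only [psi]
  grind

theorem normalized_psi (σ : Equiv.Perm (Fin n)) : Normalized (psi σ) := fun i j =>
  ⟨fun h => h.elim And.left And.left,
    fun hij => (le_total (σ i) (σ j)).imp (⟨hij, ·⟩) (⟨hij, ·⟩)⟩

theorem psi_injective : Function.Injective (psi (n := n)) := fun σ τ h =>
  Equiv.eq_of_forall_le_iff_le fun i j => by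
    rw [← PlaneData.leTwist_psi, ← PlaneData.leTwist_psi, h]

end Psi

namespace Normalized

variable {n : ℕ} {D : PlaneData n}

theorem leh_iff (hN : Normalized D) (hD : IsPlanePoset D) (i j : Fin n) :
    D.leh i j ↔ i ≤ j ∧ D.leTwist i j := by
  refine ⟨fun h => ⟨(hN i j).mp (Or.inl h), Or.inl h⟩, ?_⟩
  rintro ⟨hij, h | h⟩
  · exact h
  · obtain rfl := le_antisymm hij ((hN j i).mp (Or.inr h))
    exact hD.1 i

theorem ler_iff (hN : Normalized D) (hD : IsPlanePoset D) (i j : Fin n) :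
    D.ler i j ↔ i ≤ j ∧ D.leTwist j i := by
  refine ⟨fun h => ⟨(hN i j).mp (Or.inr h), Or.inr h⟩, ?_⟩
  rintro ⟨hij, h | h⟩
  · obtain rfl := le_antisymm hij ((hN j i).mp (Or.inl h))
    exact hD.2.2.2.1 i
  · exact h

theorem exists_psi_eq (hN : Normalized D) (hD : IsPlanePoset D) :
    ∃ σ : Equiv.Perm (Fin n), psi σ = D := by
  have := hD.isLinearOrder_leTwist
  obtain ⟨σ, hσ⟩ := exists_equiv_fin_le_iff_of_isLinearOrder (Fintype.card_fin n) D.leTwist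
  refine ⟨σ, ?_⟩
  ext i j
  · rw [hN.leh_iff hD, hσ]
    rfl
  · rw [hN.ler_iff hD, hσ]
    rfl

end Normalized

theorem stmt3 (n : ℕ) :
    (∀ σ : Equiv.Perm (Fin n), IsPlanePoset (psi σ) ∧ Normalized (psi σ)) ∧
    Function.Injective (psi (n := n)) ∧
    (∀ D : PlaneData n, IsPlanePoset D → Normalized D →
      ∃ σ : Equiv.Perm (Fin n), psi σ = D) :=
  ⟨fun σ => ⟨isPlanePoset_psi σ, normalized_psi σ⟩, psi_injective,
    fun _ hD hN => hN.exists_psi_eq hD⟩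
end

section
/- Let P₁, P₂, Q be double posets and let P = P₁·P₂ be their composition (P = P₁ ⊔ P₂, with x <_r y for all x ∈ P₁, y ∈ P₂). The map sending a bijection σ : P₁·P₂ → Q to the pair of restrictions (σ|_{P₁}, σ|_{P₂}) is a bijection from Bij(P₁·P₂, Q) onto the disjoint union over subsets I ⊆ Q of Bij(P₁, Q∖I) × Bij(P₂, I), where I = σ(P₂). Moreover, setting φ₃(σ) = #{(x,y) ∈ P² : x <_r y and σ(x) <_r σ(y)}, one has φ₃(σ) = φ₃(σ|_{P₁}) + φ₃(σ|_{P₂}) + r_{Q∖I}^I, where r_{Q∖I}^I = #{(a,b) ∈ (Q∖I)×I : a <_r b}. -/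
/-- A double poset: a finite set with two partial orders. -/
structure DoublePoset (α : Type) where
  leh : α → α → Prop
  ler : α → α → Prop
  leh_refl : ∀ x, leh x x
  leh_antisymm : ∀ ⦃x y⦄, leh x y → leh y x → x = y
  leh_trans : ∀ ⦃x y z⦄, leh x y → leh y z → leh x z
  ler_refl : ∀ x, ler x x
  ler_antisymm : ∀ ⦃x y⦄, ler x y → ler y x → x = y
  ler_trans : ∀ ⦃x y z⦄, ler x y → ler y z → ler x z

/-- Strict version of `leh`. -/
def DoublePoset.lth {α : Type} (P : DoublePoset α) (x y : α) : Prop :=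
  P.leh x y ∧ x ≠ y

/-- Strict version of `ler`. -/
def DoublePoset.ltr {α : Type} (P : DoublePoset α) (x y : α) : Prop :=
  P.ler x y ∧ x ≠ y

/-- The composition `P₁ · P₂` of two double posets: disjoint union, with
`x <ᵣ y` for every `x ∈ P₁`, `y ∈ P₂`, and no new `≤ₕ` relations. -/
def DoublePoset.comp {α β : Type} (P₁ : DoublePoset α) (P₂ : DoublePoset β) :
    DoublePoset (α ⊕ β) where
  leh x y := match x, y with
    | Sum.inl a, Sum.inl b => P₁.leh a b
    | Sum.inr a, Sum.inr b => P₂.leh a b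
    | _, _ => False
  ler x y := match x, y with
    | Sum.inl a, Sum.inl b => P₁.ler a b
    | Sum.inr a, Sum.inr b => P₂.ler a b
    | Sum.inl _, Sum.inr _ => True
    | Sum.inr _, Sum.inl _ => False
  leh_refl x := by cases x with
    | inl a => exact P₁.leh_refl a
    | inr b => exact P₂.leh_refl b
  leh_antisymm x y := by
    cases x <;> cases y <;> intro h1 h2 <;> simp_all <;>
      first
        | exact P₁.leh_antisymm h1 h2
        | exact P₂.leh_antisymm h1 h2
  leh_trans x y z := by
    cases x <;> cases y <;> cases z <;> intro h1 h2 <;> simp_all <;>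
      first
        | exact P₁.leh_trans h1 h2
        | exact P₂.leh_trans h1 h2
  ler_refl x := by cases x with
    | inl a => exact P₁.ler_refl a
    | inr b => exact P₂.ler_refl b
  ler_antisymm x y := by
    cases x <;> cases y <;> intro h1 h2 <;> simp_all <;>
      first
        | exact P₁.ler_antisymm h1 h2
        | exact P₂.ler_antisymm h1 h2
  ler_trans x y z := by
    cases x <;> cases y <;> cases z <;> intro h1 h2 <;> simp_all <;>
      first
        | exact P₁.ler_trans h1 h2
        | exact P₂.ler_trans h1 h2

/-- Restriction of a double poset to a subset. -/
def DoublePoset.restrict {β : Type} (Q : DoublePoset β) (s : Set β) :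
    DoublePoset s where
  leh x y := Q.leh x y
  ler x y := Q.ler x y
  leh_refl x := Q.leh_refl x
  leh_antisymm x y h1 h2 := Subtype.ext (Q.leh_antisymm h1 h2)
  leh_trans _ _ _ h1 h2 := Q.leh_trans h1 h2
  ler_refl x := Q.ler_refl x
  ler_antisymm x y h1 h2 := Subtype.ext (Q.ler_antisymm h1 h2)
  ler_trans _ _ _ h1 h2 := Q.ler_trans h1 h2

/-- The statistic `φ₃` of a bijection between two double posets. -/
noncomputable def phi3 {α β : Type} (P : DoublePoset α) (Q : DoublePoset β)
    (σ : α ≃ β) : ℕ :=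
  Set.ncard {p : α × α | P.ltr p.1 p.2 ∧ Q.ltr (σ p.1) (σ p.2)}

/-- `r_A^B`: number of pairs `(a,b) ∈ A × B` with `a <ᵣ b`. -/
noncomputable def rcountS {β : Type} (Q : DoublePoset β) (A B : Set β) : ℕ :=
  Set.ncard {p : β × β | p.1 ∈ A ∧ p.2 ∈ B ∧ Q.ltr p.1 p.2}

/-- The map sending a bijection `σ : P₁ · P₂ → Q` to `(I, σ|_{P₁}, σ|_{P₂})`
where `I = σ(P₂)`. -/
noncomputable def F {α β γ : Type} (σ : (α ⊕ β) ≃ γ) :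
    Σ I : Set γ, (α ≃ ↥(Iᶜ)) × (β ≃ ↥I) :=
  ⟨Set.range (fun b => σ (Sum.inr b)),
    (Equiv.ofInjective (fun a => σ (Sum.inl a))
        (fun a a' h => by simpa using σ.injective h)).trans
      (Equiv.setCongr (by
        ext c
        obtain ⟨x, rfl⟩ := σ.surjective c
        cases x <;> simp)),
    Equiv.ofInjective (fun b => σ (Sum.inr b))
      (fun b b' h => by simpa using σ.injective h)⟩

/-! A bijection `σ : P₁ · P₂ → Q` is the same as a choice of `I = σ(P₂)` together
with bijections `P₁ → Q ∖ I` and `P₂ → I`. A pair counted by `φ₃(σ)` lies in `P₁ × P₁`,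
in `P₂ × P₂`, or in `P₁ × P₂` (never in `P₂ × P₁`, as nothing of `P₂` is `<ᵣ` anything of `P₁`);
the first two blocks are counted by `φ₃` of the restrictions, and on the third block the
condition `x <ᵣ y` is automatic, so it is counted by `r_{Q∖I}^I`. -/

theorem Set.ncard_sum_prod_sum {α β : Type} [Fintype α] [Fintype β]
    (S : Set ((α ⊕ β) × (α ⊕ β))) :
    S.ncard = (Prod.map Sum.inl Sum.inl ⁻¹' S).ncard + (Prod.map Sum.inr Sum.inr ⁻¹' S).ncard +
      (Prod.map Sum.inl Sum.inr ⁻¹' S).ncard + (Prod.map Sum.inr Sum.inl ⁻¹' S).ncard := by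
  classical
  simp only [Set.ncard_eq_toFinset_card', ← Set.filter_mem_univ_eq_toFinset, Finset.card_filter,
    Fintype.sum_prod_type, Fintype.sum_sum_type, Finset.sum_add_distrib, Set.mem_preimage,
    Prod.map]
  ring

theorem rcountS_range_range {α β γ : Type} (Q : DoublePoset γ) {f : α → γ} {g : β → γ}
    (hf : f.Injective) (hg : g.Injective) :
    rcountS Q (Set.range f) (Set.range g) = {p : α × β | Q.ltr (f p.1) (g p.2)}.ncard := by
  have himage : {p : γ × γ | p.1 ∈ Set.range f ∧ p.2 ∈ Set.range g ∧ Q.ltr p.1 p.2} =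
      Prod.map f g '' {p : α × β | Q.ltr (f p.1) (g p.2)} := by
    ext ⟨c, d⟩
    simp only [Set.mem_ofPred_eq, Set.mem_range, Set.mem_image, Prod.exists, Prod.map,
      Prod.mk.injEq]
    constructor
    · rintro ⟨⟨a, rfl⟩, ⟨b, rfl⟩, h⟩
      exact ⟨a, b, h, rfl, rfl⟩
    · rintro ⟨a, b, h, rfl, rfl⟩
      exact ⟨⟨a, rfl⟩, ⟨b, rfl⟩, h⟩
  rw [rcountS, himage, Set.ncard_image_of_injective _ (hf.prodMap hg)]

section Restrictions

variable {α β γ : Type}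

@[simp]
theorem F_snd_fst_apply (σ : (α ⊕ β) ≃ γ) (a : α) : ((F σ).2.1 a : γ) = σ (Sum.inl a) := rfl

@[simp]
theorem F_snd_snd_apply (σ : (α ⊕ β) ≃ γ) (b : β) : ((F σ).2.2 b : γ) = σ (Sum.inr b) := rfl

theorem compl_F_fst (σ : (α ⊕ β) ≃ γ) : (F σ).1ᶜ = Set.range (σ ∘ Sum.inl) := by
  ext c
  obtain ⟨x, rfl⟩ := σ.surjective c
  cases x <;> simp [F]

theorem sigma_ext_coe {x y : Σ I : Set γ, (α ≃ ↥(Iᶜ)) × (β ≃ ↥I)} (h₁ : x.1 = y.1)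
    (h₂ : ∀ a, (x.2.1 a : γ) = y.2.1 a) (h₃ : ∀ b, (x.2.2 b : γ) = y.2.2 b) : x = y := by
  obtain ⟨I, e₁, e₂⟩ := x
  obtain ⟨J, f₁, f₂⟩ := y
  subst h₁
  simp only [Sigma.mk.inj_iff, heq_eq_eq, Prod.mk.injEq, true_and]
  exact ⟨Equiv.ext fun a => Subtype.ext (h₂ a), Equiv.ext fun b => Subtype.ext (h₃ b)⟩

open Classical in
noncomputable def ofRestrictions (x : Σ I : Set γ, (α ≃ ↥(Iᶜ)) × (β ≃ ↥I)) : (α ⊕ β) ≃ γ :=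
  (Equiv.sumComm α β).trans ((x.2.2.sumCongr x.2.1).trans (Equiv.Set.sumCompl x.1))

@[simp]
theorem ofRestrictions_inl (x : Σ I : Set γ, (α ≃ ↥(Iᶜ)) × (β ≃ ↥I)) (a : α) :
    ofRestrictions x (Sum.inl a) = x.2.1 a := by
  simp [ofRestrictions]

@[simp]
theorem ofRestrictions_inr (x : Σ I : Set γ, (α ≃ ↥(Iᶜ)) × (β ≃ ↥I)) (b : β) :
    ofRestrictions x (Sum.inr b) = x.2.2 b := by
  simp [ofRestrictions]

noncomputable def equivSigmaRestrictions :
    ((α ⊕ β) ≃ γ) ≃ Σ I : Set γ, (α ≃ ↥(Iᶜ)) × (β ≃ ↥I) where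
  toFun := F
  invFun := ofRestrictions
  left_inv σ := by
    ext (a | b) <;> simp
  right_inv x := by
    refine sigma_ext_coe ?_ (by simp) (by simp)
    show Set.range (fun b => ofRestrictions x (Sum.inr b)) = x.1
    simp only [ofRestrictions_inr]
    exact x.2.2.surjective.range_comp Subtype.val |>.trans Subtype.range_coe

end Restrictions

def phi3Pairs {α β : Type} (P : DoublePoset α) (Q : DoublePoset β) (σ : α ≃ β) : Set (α × α) :=
  {p | P.ltr p.1 p.2 ∧ Q.ltr (σ p.1) (σ p.2)}

theorem phi3_eq_ncard_phi3Pairs {α β : Type} (P : DoublePoset α) (Q : DoublePoset β)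
    (σ : α ≃ β) : phi3 P Q σ = (phi3Pairs P Q σ).ncard := rfl

section Composition

variable {α β γ : Type} (P₁ : DoublePoset α) (P₂ : DoublePoset β) (Q : DoublePoset γ)
  (σ : (α ⊕ β) ≃ γ)

theorem preimage_inl_inl_phi3Pairs_comp :
    Prod.map Sum.inl Sum.inl ⁻¹' phi3Pairs (P₁.comp P₂) Q σ =
      phi3Pairs P₁ (Q.restrict (F σ).1ᶜ) (F σ).2.1 := by
  ext
  simp [phi3Pairs, DoublePoset.comp, DoublePoset.restrict, DoublePoset.ltr]

theorem preimage_inr_inr_phi3Pairs_comp :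
    Prod.map Sum.inr Sum.inr ⁻¹' phi3Pairs (P₁.comp P₂) Q σ =
      phi3Pairs P₂ (Q.restrict (F σ).1) (F σ).2.2 := by
  ext
  simp [phi3Pairs, DoublePoset.comp, DoublePoset.restrict, DoublePoset.ltr]

theorem preimage_inl_inr_phi3Pairs_comp :
    Prod.map Sum.inl Sum.inr ⁻¹' phi3Pairs (P₁.comp P₂) Q σ =
      {p : α × β | Q.ltr (σ (Sum.inl p.1)) (σ (Sum.inr p.2))} := by
  ext
  simp [phi3Pairs, DoublePoset.comp, DoublePoset.ltr]

theorem preimage_inr_inl_phi3Pairs_comp :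
    Prod.map Sum.inr Sum.inl ⁻¹' phi3Pairs (P₁.comp P₂) Q σ = ∅ := by
  ext
  simp [phi3Pairs, DoublePoset.comp, DoublePoset.ltr]

theorem rcountS_F :
    rcountS Q (F σ).1ᶜ (F σ).1 = {p : α × β | Q.ltr (σ (Sum.inl p.1)) (σ (Sum.inr p.2))}.ncard := by
  rw [compl_F_fst]
  exact rcountS_range_range Q (σ.injective.comp Sum.inl_injective)
    (σ.injective.comp Sum.inr_injective)

end Composition

theorem stmt10_general {α β γ : Type} [Fintype α] [Fintype β]
    (P₁ : DoublePoset α) (P₂ : DoublePoset β) (Q : DoublePoset γ) :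
    Function.Bijective (F (α := α) (β := β) (γ := γ)) ∧
    ∀ σ : (α ⊕ β) ≃ γ,
      phi3 (P₁.comp P₂) Q σ =
        phi3 P₁ (Q.restrict ((F σ).1)ᶜ) (F σ).2.1 +
        phi3 P₂ (Q.restrict (F σ).1) (F σ).2.2 +
        rcountS Q ((F σ).1)ᶜ (F σ).1 := by
  refine ⟨equivSigmaRestrictions.bijective, fun σ => ?_⟩
  simp only [phi3_eq_ncard_phi3Pairs]
  rw [Set.ncard_sum_prod_sum, preimage_inl_inl_phi3Pairs_comp, preimage_inr_inr_phi3Pairs_comp,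
    preimage_inl_inr_phi3Pairs_comp, preimage_inr_inl_phi3Pairs_comp, Set.ncard_empty, add_zero,
    rcountS_F]

theorem stmt10 {α β γ : Type} [Fintype α] [Fintype β] [Fintype γ]
    (P₁ : DoublePoset α) (P₂ : DoublePoset β) (Q : DoublePoset γ) :
    Function.Bijective (F (α := α) (β := β) (γ := γ)) ∧
    ∀ σ : (α ⊕ β) ≃ γ,
      phi3 (P₁.comp P₂) Q σ =
        phi3 P₁ (Q.restrict ((F σ).1)ᶜ) (F σ).2.1 +
        phi3 P₂ (Q.restrict (F σ).1) (F σ).2.2 +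
        rcountS Q ((F σ).1)ᶜ (F σ).1 :=
  stmt10_general P₁ P₂ Q
end

section
/- For every plane poset P with n elements, the set S(P, ι(P)) of bijections σ : P → ι(P) such that (x ≤_h y in P implies σ(x) ≤_r σ(y) in ι(P)) and (σ(x) ≤_h σ(y) in ι(P) implies x ≤_r y in P) is reduced to the single element Id_P. Here ι(P) is P with the two orders exchanged. -/
/-- `ι(P)`: the plane poset obtained by exchanging the two orders. -/
def PlanePoset.iota {α : Type} (P : PlanePoset α) : PlanePoset α where
  leh := P.ler
  ler := P.leh
  leh_refl := P.ler_refl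
  leh_antisymm := P.ler_antisymm
  leh_trans := P.ler_trans
  ler_refl := P.leh_refl
  ler_antisymm := P.leh_antisymm
  ler_trans := P.leh_trans
  compat x y hxy := by have := P.compat x y hxy; tauto

namespace Equiv.Perm

variable {α : Type*} {r : α → α → Prop}

theorem rel_of_rel_apply [Finite α] (σ : Perm α) (hσ : ∀ x y, r x y → r (σ x) (σ y))
    {x y : α} (h : r (σ x) (σ y)) : r x y := by
  let f : α × α ↪ α × α := σ.toEmbedding.prodMap σ.toEmbedding
  have hf : f '' {p | r p.1 p.2} = {p | r p.1 p.2} :=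
    Set.map_eq_of_subset (by rintro _ ⟨p, hp, rfl⟩; exact hσ _ _ hp)
  have hmem : (σ x, σ y) ∈ f '' {p | r p.1 p.2} := by rw [hf]; exact h
  obtain ⟨p, hp, hpxy⟩ := hmem
  obtain rfl : p = (x, y) := f.injective hpxy
  exact hp

theorem rel_pow_apply_of_rel_apply (σ : Perm α) (hrefl : ∀ x, r x x)
    (htrans : ∀ ⦃x y z⦄, r x y → r y z → r x z) (hσ : ∀ x y, r x y → r (σ x) (σ y))
    {x : α} (hx : r x (σ x)) (k : ℕ) : r x ((σ ^ k) x) := by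
  induction k with
  | zero => exact hrefl x
  | succ k ih => exact htrans hx (by simpa [pow_succ'] using hσ _ _ ih)

theorem rel_apply_of_rel_apply [Finite α] (σ : Perm α) (hrefl : ∀ x, r x x)
    (htrans : ∀ ⦃x y z⦄, r x y → r y z → r x z) (hσ : ∀ x y, r x y → r (σ x) (σ y))
    {x : α} (hx : r x (σ x)) : r (σ x) x := by
  have hcycle := hσ _ _ (rel_pow_apply_of_rel_apply σ hrefl htrans hσ hx (orderOf σ - 1))
  rwa [← mul_apply, ← pow_succ', Nat.sub_add_cancel (orderOf_pos σ), pow_orderOf_eq_one,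
    one_apply] at hcycle

theorem apply_eq_of_rel_apply [Finite α] (σ : Perm α) (hrefl : ∀ x, r x x)
    (hantisymm : ∀ ⦃x y⦄, r x y → r y x → x = y) (htrans : ∀ ⦃x y z⦄, r x y → r y z → r x z)
    (hσ : ∀ x y, r x y → r (σ x) (σ y)) {x : α} (hx : r x (σ x) ∨ r (σ x) x) : σ x = x := by
  rcases hx with hx | hx
  · exact hantisymm (rel_apply_of_rel_apply σ hrefl htrans hσ hx) hx
  · exact hantisymm hx (rel_apply_of_rel_apply (r := flip r) σ hrefl
      (fun _ _ _ h h' ↦ htrans h' h) (fun _ _ h ↦ hσ _ _ h) hx)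

end Equiv.Perm

theorem PlanePoset.eq_refl_of_map_leh_of_map_ler {α : Type} [Finite α] (P : PlanePoset α)
    (σ : α ≃ α) (hleh : ∀ x y, P.leh x y → P.leh (σ x) (σ y))
    (hler : ∀ x y, P.ler x y → P.ler (σ x) (σ y)) :
    σ = Equiv.refl α := by
  ext x
  by_contra hx
  have hcomparable := P.compat (σ x) x hx
  by_cases hh : P.leh x (σ x) ∨ P.leh (σ x) x
  · exact hx (Equiv.Perm.apply_eq_of_rel_apply σ P.leh_refl P.leh_antisymm P.leh_trans hleh hh)
  · have hr : P.ler x (σ x) ∨ P.ler (σ x) x := by tauto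
    exact hx (Equiv.Perm.apply_eq_of_rel_apply σ P.ler_refl P.ler_antisymm P.ler_trans hler hr)

/-- `S(P,ι(P))` is reduced to the identity. -/
theorem stmt11 {α : Type} [Fintype α] (P : PlanePoset α) (σ : α ≃ α) :
    ((∀ x y, P.leh x y → P.iota.ler (σ x) (σ y)) ∧
     (∀ x y, P.iota.leh (σ x) (σ y) → P.ler x y)) ↔ σ = Equiv.refl α := by
  constructor
  · rintro ⟨hleh, hler_reflect⟩
    replace hler_reflect : ∀ x y, P.ler (σ x) (σ y) → P.ler x y := hler_reflect
    have hler : ∀ x y, P.ler x y → P.ler (σ x) (σ y) := fun x y h ↦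
      Equiv.Perm.rel_of_rel_apply σ.symm
        (fun a b hab ↦ hler_reflect _ _ (by simpa using hab)) (by simpa using h)
    exact P.eq_refl_of_map_leh_of_map_ler σ hleh hler
  · rintro rfl
    exact ⟨fun _ _ h ↦ h, fun _ _ h ↦ h⟩
end

section
/- Let P be a plane poset with n elements (identified with {1,…,n} via its induced total order) with associated permutation σ = Ψ_n(P), and let Q be a plane poset with n elements with associated permutation τ = Ψ_n(Q). If the set S(P,Q) is nonempty, then τ ≥ (n n−1 ⋯ 1) ∘ σ in the lexicographic order on S_n; equivalently, ι(P) is the minimum, for the lexicographic order transported to plane posets via Ψ_n, of all Q with S(P,Q) ≠ ∅. -/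
/-- `≤ₕ` for the plane poset `Ψₙ(σ)`. -/
def lehOf {n : ℕ} (σ : Equiv.Perm (Fin n)) (i j : Fin n) : Prop :=
  i ≤ j ∧ σ i ≤ σ j

/-- `≤ᵣ` for the plane poset `Ψₙ(σ)`. -/
def lerOf {n : ℕ} (σ : Equiv.Perm (Fin n)) (i j : Fin n) : Prop :=
  i ≤ j ∧ σ j ≤ σ i

/-- Lexicographic order on words `(f 1, …, f n)`. -/
def lexLe {n : ℕ} (f g : Fin n → Fin n) : Prop :=
  f = g ∨ ∃ i : Fin n, (∀ j, j < i → f j = g j) ∧ f i < g i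

private lemma card_filter_perm_lt {n : ℕ} (π : Equiv.Perm (Fin n)) (a : Fin n) :
    (Finset.univ.filter fun w => π w < a).card = (a : ℕ) := by
  classical
  rw [← Fin.card_Iio (b := a)]
  apply Finset.card_bij (fun w _ => π w)
  · intro w hw
    simp only [Finset.mem_filter] at hw
    simpa using hw.2
  · intro w _ w' _ h
    exact π.injective h
  · intro b hb
    refine ⟨π.symm b, ?_, by simp⟩
    simp only [Finset.mem_filter, Finset.mem_univ, true_and, Equiv.apply_symm_apply]
    simpa using hb

/-- The key inductive step. -/
private lemma keyStep {n : ℕ} (σ τ : Equiv.Perm (Fin n)) (f : Fin n ≃ Fin n)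
    (H1 : ∀ x y, x ≤ y → σ x ≤ σ y → f x ≤ f y ∧ τ (f y) ≤ τ (f x))
    (H2 : ∀ x y, f x ≤ f y → τ (f x) ≤ τ (f y) → x ≤ y ∧ σ y ≤ σ x)
    (i : Fin n)
    (IH : ∀ j, j < i → τ j = (σ j).rev ∧ f j = j ∧
      (∀ y, j < y → (σ y < σ j ↔ τ j < τ (f y)))) :
    (σ i).rev < τ i ∨ (τ i = (σ i).rev ∧ f i = i ∧
      (∀ y, i < y → (σ y < σ i ↔ τ i < τ (f y)))) := by
  classical
  set x := f.symm i with hx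
  have hfx : f x = i := f.apply_symm_apply i
  have F1 : ∀ j, j < i → f j = j := fun j hj => (IH j hj).2.1
  have F2 : ∀ y, i ≤ y → i ≤ f y := by
    intro y hy
    by_contra h
    push_neg at h
    have : f (f y) = f y := F1 (f y) h
    have : f y = y := f.injective this
    rw [this] at h
    exact absurd hy (not_le.mpr h)
  have F3 : i ≤ x := by
    by_contra h
    push_neg at h
    have : f x = x := F1 x h
    rw [hfx] at this
    rw [← this] at h
    exact lt_irrefl i h
  have F4 : ∀ w, i ≤ w → w < x → σ x < σ w := by
    intro w hiw hwx
    by_contra h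
    push_neg at h
    have h1 := H1 w x (le_of_lt hwx) h
    rw [hfx] at h1
    have : f w = i := le_antisymm h1.1 (F2 w hiw)
    have : w = x := by
      rw [hx]; rw [← this]; exact (f.symm_apply_apply w).symm
    exact absurd this (ne_of_lt hwx)
  have F5 : ∀ w, i ≤ w → w ≠ x → σ x < σ w → τ (f w) < τ i := by
    intro w hiw hwx hs
    have hfw : f w ≠ i := by
      intro hc
      exact hwx (by rw [hx, ← hc, f.symm_apply_apply])
    rcases lt_trichotomy w x with hlt | heq | hgt
    · by_contra h
      push_neg at h
      have h2 := H2 x w (by rw [hfx]; exact F2 w hiw) (by rw [hfx]; exact h)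
      exact absurd h2.1 (not_le.mpr hlt)
    · exact absurd heq hwx
    · have h1 := H1 x w (le_of_lt hgt) (le_of_lt hs)
      rw [hfx] at h1
      exact lt_of_le_of_ne h1.2 (fun hc => hfw (τ.injective hc))
  have F6 : ∀ z, z < i → σ x < σ z → τ z < τ i := by
    intro z hz hs
    have := ((IH z hz).2.2 x (lt_of_lt_of_le hz F3)).mp hs
    rwa [hfx] at this
  -- counting
  set B := Finset.univ.filter (fun w => σ x < σ w) with hB
  set C := Finset.univ.filter (fun z => τ z < τ i) with hC
  have hmaps : ∀ w ∈ B, f w ∈ C := by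
    intro w hw
    rw [hB, Finset.mem_filter] at hw
    rw [hC, Finset.mem_filter]
    refine ⟨Finset.mem_univ _, ?_⟩
    rcases lt_or_ge w i with hwi | hiw
    · rw [F1 w hwi]
      exact F6 w hwi hw.2
    · have hwx : w ≠ x := fun hc => absurd (hc ▸ hw.2) (lt_irrefl _)
      exact F5 w hiw hwx hw.2
  have hBcard : B.card = n - 1 - (σ x : ℕ) := by
    rw [hB, ← Fin.card_Ioi (a := σ x)]
    apply Finset.card_bij (fun w _ => σ w)
    · intro w hw
      simp only [Finset.mem_filter] at hw
      simpa using hw.2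
    · intro w _ w' _ h
      exact σ.injective h
    · intro b hb
      refine ⟨σ.symm b, ?_, by simp⟩
      simp only [Finset.mem_filter, Finset.mem_univ, true_and, Equiv.apply_symm_apply]
      simpa using hb
  have hCcard : C.card = (τ i : ℕ) := card_filter_perm_lt τ (τ i)
  have hle : B.card ≤ C.card :=
    Finset.card_le_card_of_injOn f hmaps (f.injective.injOn)
  have hrevle : (σ x).rev ≤ τ i := by
    rw [Fin.le_def, Fin.val_rev]
    rw [hBcard, hCcard] at hle
    omega
  rcases eq_or_lt_of_le F3 with hix | hix
  · -- x = i
    have hσxi : σ x = σ i := by rw [← hix]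
    rw [hσxi] at hrevle
    rcases eq_or_lt_of_le hrevle with heq | hlt
    · right
      have hfi : f i = i := by rw [hix, hfx, hix]
      refine ⟨heq.symm, hfi, ?_⟩
      intro y hy
      constructor
      · intro hs
        by_contra hct
        push_neg at hct
        have hfy : f y ≠ i := by
          intro hc
          have : y = x := by rw [hx, ← hc, f.symm_apply_apply]
          exact absurd (this.trans hix.symm) (ne_of_gt hy)
        have hfyC : f y ∈ C := by
          rw [hC, Finset.mem_filter]
          have hfyi : f i = i := hfi
          refine ⟨Finset.mem_univ _, lt_of_le_of_ne hct ?_⟩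
          intro hc
          exact hfy (τ.injective hc)
        -- equality of cards forces image = C
        have himg : B.image f ⊆ C := by
          intro z hz
          rw [Finset.mem_image] at hz
          obtain ⟨w, hw, hwz⟩ := hz
          exact hwz ▸ hmaps w hw
        have hcardimg : (B.image f).card = C.card := by
          rw [Finset.card_image_of_injOn (f.injective.injOn), hBcard, hCcard, hσxi]
          have : ((σ i).rev : ℕ) = (τ i : ℕ) := by rw [heq]
          rw [Fin.val_rev] at this
          omega
        have hegal : B.image f = C :=
          Finset.eq_of_subset_of_card_le himg (le_of_eq hcardimg.symm)
        have : f y ∈ B.image f := by rw [hegal]; exact hfyC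
        rw [Finset.mem_image] at this
        obtain ⟨w, hw, hwy⟩ := this
        have : w = y := f.injective hwy
        rw [this] at hw
        rw [hB, Finset.mem_filter] at hw
        rw [hσxi] at hw
        exact absurd hs (not_lt.mpr (le_of_lt hw.2))
      · intro ht
        have h2 := H2 i y (by rw [hfi]; exact F2 y (le_of_lt hy)) (by rw [hfi]; exact le_of_lt ht)
        exact lt_of_le_of_ne h2.2 (fun hc => absurd (σ.injective hc) (ne_of_gt hy))
    · exact Or.inl hlt
  · -- i < x
    left
    have : σ x < σ i := F4 i (le_refl i) hix
    calc (σ i).rev < (σ x).rev := by rwa [Fin.rev_lt_rev]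
    _ ≤ τ i := hrevle

/-- If `S(Ψₙ(σ), Ψₙ(τ))` is nonempty then `τ ≥ (n ⋯ 1) ∘ σ` lexicographically;
equivalently, `ι(P)` is the lexicographic minimum of all `Q` with `S(P,Q) ≠ ∅`. -/
theorem stmt16 {n : ℕ} (σ τ : Equiv.Perm (Fin n))
    (h : ∃ f : Fin n ≃ Fin n,
      (∀ x y, lehOf σ x y → lerOf τ (f x) (f y)) ∧
      (∀ x y, lehOf τ (f x) (f y) → lerOf σ x y)) :
    lexLe (fun i => (σ i).rev) (fun i => τ i) := by
  classical
  obtain ⟨f, hf1, hf2⟩ := h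
  have H1 : ∀ x y, x ≤ y → σ x ≤ σ y → f x ≤ f y ∧ τ (f y) ≤ τ (f x) :=
    fun x y hxy hσ => hf1 x y ⟨hxy, hσ⟩
  have H2 : ∀ x y, f x ≤ f y → τ (f x) ≤ τ (f y) → x ≤ y ∧ σ y ≤ σ x :=
    fun x y hxy hτ => hf2 x y ⟨hxy, hτ⟩
  set E : Fin n → Prop := fun i => τ i = (σ i).rev ∧ f i = i ∧
      (∀ y, i < y → (σ y < σ i ↔ τ i < τ (f y))) with hE
  by_cases hall : ∀ i, E i
  · left
    funext i
    exact ((hall i).1).symm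
  · right
    push_neg at hall
    have hSne : (Finset.univ.filter fun i => ¬ E i).Nonempty := by
      obtain ⟨i, hi⟩ := hall
      exact ⟨i, by rw [Finset.mem_filter]; exact ⟨Finset.mem_univ _, hi⟩⟩
    set i₀ := (Finset.univ.filter fun i => ¬ E i).min' hSne with hi₀
    have hIH : ∀ j, j < i₀ → E j := by
      intro j hj
      by_contra hc
      have hjS : j ∈ Finset.univ.filter fun i => ¬ E i := by
        rw [Finset.mem_filter]; exact ⟨Finset.mem_univ _, hc⟩
      exact absurd hj (not_lt.mpr (Finset.min'_le _ j hjS))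
    have hni₀ : ¬ E i₀ := by
      have hmem := Finset.min'_mem _ hSne
      rw [Finset.mem_filter] at hmem
      exact hmem.2
    rcases keyStep σ τ f H1 H2 i₀ hIH with hlt | hEi
    · exact ⟨i₀, fun j hj => ((hIH j hj).1).symm, hlt⟩
    · exact absurd hEi hni₀
end
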